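/- For 0 < |q| < 1 and all x ∈ ℂ*, the following connection formula holds between the Ramanujan function and the q-Airy function: A_{q²}(−q³/x²) = (1/((q;q)_∞ (−1;q)_∞)) · [ θ_q(x/q) · Ai_q(−x) + θ_q(−x/q) · Ai_q(x) ]. -/

import Mathlib

/-- Finite q-Pochhammer symbol `(a;q)_n`. -/
noncomputable def qPoch (a q : ℂ) (n : ℕ) : ℂ := ∏ k ∈ Finset.range n, (1 - a * q ^ k)

/-- Infinite q-Pochhammer symbol `(a;q)_∞`. -/
noncomputable def qPochInf (a q : ℂ) : ℂ := ∏' n : ℕ, (1 - a * q ^ n)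

/-- The Ramanujan function `A_q(x)`. -/
noncomputable def ramanujanA (q x : ℂ) : ℂ := ∑' n : ℕ, q ^ (n ^ 2) / qPoch q q n * (-x) ^ n

/-- The q-Airy function `Ai_q(x)`. -/
noncomputable def qAiry (q x : ℂ) : ℂ :=
  ∑' n : ℕ, (-1) ^ n * q ^ (n * (n - 1) / 2) / (qPoch (-q) q n * qPoch q q n) * (-x) ^ n

/-- Jacobi theta function `θ_q(x)`. -/
noncomputable def jTheta (q x : ℂ) : ℂ := ∑' n : ℤ, q ^ (n * (n - 1) / 2) * x ^ n

/-!
Expanding both products on the right, the terms of index `(n, k)` of `θ_q(x/q) Ai_q(-x)` and of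
`θ_q(-x/q) Ai_q(x)` differ by the sign `(-1)^(n+k)`, so only `n = 2m - k` survives, with weight 2.
For fixed `m` the sum over `k` is, by Euler's identity
`∑ (-1)^k Q^(k(k-1)/2) z^k / (Q;Q)_k = (z;Q)_∞` at `Q = q²`, equal to
`2 q^(2m²-3m) x^(2m) (q^(2-2m); q²)_∞`. This vanishes for `m ≥ 1` and equals
`2 q^(2j²+3j) x^(-2j) (q²;q²)_∞ / (q²;q²)_j` for `m = -j`, so the right-hand side is
`2 (q²;q²)_∞ A_{q²}(-q³/x²)`, while `(q;q)_∞ (-1;q)_∞ = 2 (q²;q²)_∞`.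
Euler's identity itself follows from `F(z) = (1 - z) F(Qz)` for its left side `F`, iterated, and
`F(Q^N z) → F(0) = 1`.
-/

open Filter Topology Finset

lemma qPoch_succ (a q : ℂ) (n : ℕ) : qPoch a q (n + 1) = qPoch a q n * (1 - a * q ^ n) :=
  prod_range_succ _ _

lemma qPoch_mul_qPoch_neg (a q : ℂ) (n : ℕ) :
    qPoch a q n * qPoch (-a) q n = qPoch (a ^ 2) (q ^ 2) n := by
  simp only [qPoch, ← prod_mul_distrib]
  exact prod_congr rfl fun k _ => by ring

lemma qPoch_ne_zero {a q : ℂ} (h : ∀ k, a * q ^ k ≠ 1) (n : ℕ) : qPoch a q n ≠ 0 :=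
  prod_ne_zero_iff.2 fun k _ => sub_ne_zero.2 (h k).symm

lemma mul_pow_ne_one {q : ℂ} (hq : ‖q‖ < 1) (k : ℕ) : q * q ^ k ≠ 1 := by
  rw [← pow_succ']
  exact ne_of_apply_ne norm (by simpa using (pow_lt_one₀ (norm_nonneg q) hq k.succ_ne_zero).ne)

lemma norm_sq_lt_one {q : ℂ} (hq : ‖q‖ < 1) : ‖q ^ 2‖ < 1 := by
  simpa using pow_lt_one₀ (norm_nonneg q) hq two_ne_zero

lemma one_sub_norm_le_norm_one_sub_mul_pow {q : ℂ} (hq : ‖q‖ < 1) (k : ℕ) :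
    1 - ‖q‖ ≤ ‖1 - q * q ^ k‖ := by
  have : ‖q * q ^ k‖ ≤ ‖q‖ := by
    rw [norm_mul, norm_pow]
    exact mul_le_of_le_one_right (norm_nonneg q) (pow_le_one₀ (norm_nonneg q) hq.le)
  linarith [norm_sub_norm_le (1 : ℂ) (q * q ^ k), norm_one (α := ℂ)]

lemma summable_norm_mul_pow (a : ℂ) {q : ℂ} (hq : ‖q‖ < 1) :
    Summable fun n : ℕ => ‖a * q ^ n‖ := by
  simpa [norm_mul, norm_pow] using
    (summable_geometric_of_lt_one (norm_nonneg q) hq).mul_left ‖a‖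

lemma multipliable_one_sub_mul_pow (a : ℂ) {q : ℂ} (hq : ‖q‖ < 1) :
    Multipliable fun n : ℕ => 1 - a * q ^ n := by
  simpa [sub_eq_add_neg] using
    multipliable_one_add_of_summable (f := fun n : ℕ => -(a * q ^ n))
      (by simpa using summable_norm_mul_pow a hq)

lemma qPochInf_ne_zero {a q : ℂ} (hq : ‖q‖ < 1) (h : ∀ n, a * q ^ n ≠ 1) :
    qPochInf a q ≠ 0 := by
  simpa [qPochInf, sub_eq_add_neg] using
    tprod_one_add_ne_zero_of_summable (f := fun n : ℕ => -(a * q ^ n))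
      (fun n => by simpa [← sub_eq_add_neg, sub_eq_zero] using (h n).symm)
      (by simpa using summable_norm_mul_pow a hq)

lemma qPoch_mul_qPochInf (a : ℂ) {q : ℂ} (hq : ‖q‖ < 1) (N : ℕ) :
    qPoch a q N * qPochInf (a * q ^ N) q = qPochInf a q := by
  have hshift : (fun n => 1 - a * q ^ (n + N)) = fun n => 1 - a * q ^ N * q ^ n := by
    ext n; ring
  have h := Multipliable.prod_mul_tprod_nat_mul' (f := fun n => 1 - a * q ^ n) (k := N)
    (hshift ▸ multipliable_one_sub_mul_pow _ hq)
  rwa [hshift] at h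

lemma qPochInf_eq_zero {a q : ℂ} (hq : ‖q‖ < 1) {N : ℕ} (h : a * q ^ N = 1) :
    qPochInf a q = 0 := by
  rw [← qPoch_mul_qPochInf a hq (N + 1), qPoch_succ, h, sub_self, mul_zero, zero_mul]

lemma qPochInf_mul_qPochInf_neg (a : ℂ) {q : ℂ} (hq : ‖q‖ < 1) :
    qPochInf a q * qPochInf (-a) q = qPochInf (a ^ 2) (q ^ 2) := by
  rw [qPochInf, qPochInf, ← (multipliable_one_sub_mul_pow a hq).tprod_mul
    (multipliable_one_sub_mul_pow (-a) hq)]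
  exact tprod_congr fun n => by ring

lemma qPochInf_neg_one {q : ℂ} (hq : ‖q‖ < 1) : qPochInf (-1) q = 2 * qPochInf (-q) q := by
  rw [← qPoch_mul_qPochInf (-1) hq 1]
  norm_num [qPoch]

lemma summable_norm_of_norm_succ_le {E : Type*} [SeminormedAddCommGroup E] {f : ℕ → E}
    {r : ℕ → ℝ} (hr : Tendsto r atTop (𝓝 0)) (h : ∀ k, ‖f (k + 1)‖ ≤ r k * ‖f k‖) :
    Summable fun k => ‖f k‖ := by
  refine summable_of_ratio_norm_eventually_le (r := 1 / 2) (by norm_num) ?_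
  filter_upwards [hr.eventually_le_const (by norm_num : (0 : ℝ) < 1 / 2)] with k hk
  simpa using (h k).trans (mul_le_mul_of_nonneg_right hk (norm_nonneg _))

/-- With `p = Q` these are Euler's coefficients of `(z;Q)_∞`; with `p = q`, `Q = q²` those of
the q-Airy function. -/
noncomputable def qExpCoeff (p Q : ℂ) (k : ℕ) : ℂ :=
  (-1) ^ k * p ^ (k * (k - 1) / 2) / qPoch Q Q k

lemma qExpCoeff_zero (p Q : ℂ) : qExpCoeff p Q 0 = 1 := by simp [qExpCoeff, qPoch]

lemma qExpCoeff_succ_mul (p : ℂ) {Q : ℂ} (hQ : ‖Q‖ < 1) (k : ℕ) :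
    qExpCoeff p Q (k + 1) * (1 - Q * Q ^ k) = -p ^ k * qExpCoeff p Q k := by
  have hk : qPoch Q Q k ≠ 0 := qPoch_ne_zero (mul_pow_ne_one hQ) k
  have hk' : 1 - Q * Q ^ k ≠ 0 := sub_ne_zero.2 (mul_pow_ne_one hQ k).symm
  rw [qExpCoeff, qExpCoeff, qPoch_succ, Nat.triangle_succ, pow_add, pow_succ]
  field_simp
  ring

lemma summable_norm_qExpCoeff_mul_pow {p Q : ℂ} (hp : ‖p‖ < 1) (hQ : ‖Q‖ < 1) (z : ℂ) :
    Summable fun k => ‖qExpCoeff p Q k * z ^ k‖ := by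
  refine summable_norm_of_norm_succ_le (r := fun k => ‖p‖ ^ k * ‖z‖ / (1 - ‖Q‖))
    ?_ fun k => ?_
  · simpa using ((tendsto_pow_atTop_nhds_zero_of_lt_one (norm_nonneg p) hp).mul_const
      ‖z‖).div_const (1 - ‖Q‖)
  · have hQ' : 0 < 1 - ‖Q‖ := by linarith
    have hrec := congrArg (‖· * z ^ (k + 1)‖) (qExpCoeff_succ_mul p hQ k)
    simp only [norm_mul, norm_neg, norm_pow] at hrec ⊢
    rw [div_mul_eq_mul_div, le_div_iff₀ hQ']
    calc ‖qExpCoeff p Q (k + 1)‖ * ‖z‖ ^ (k + 1) * (1 - ‖Q‖)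
        ≤ ‖qExpCoeff p Q (k + 1)‖ * ‖1 - Q * Q ^ k‖ * ‖z‖ ^ (k + 1) := by
          rw [mul_right_comm]
          gcongr
          exact one_sub_norm_le_norm_one_sub_mul_pow hQ k
      _ = ‖p‖ ^ k * ‖z‖ * (‖qExpCoeff p Q k‖ * ‖z‖ ^ k) := by rw [hrec]; ring

lemma tsum_qExpCoeff_mul_pow_eq {Q : ℂ} (hQ : ‖Q‖ < 1) (z : ℂ) :
    ∑' k, qExpCoeff Q Q k * z ^ k = (1 - z) * ∑' k, qExpCoeff Q Q k * (Q * z) ^ k := by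
  set S := ∑' k, qExpCoeff Q Q k * (Q * z) ^ k
  have hS : HasSum (fun k => qExpCoeff Q Q k * (Q * z) ^ k) S :=
    (summable_norm_qExpCoeff_mul_pow hQ hQ _).of_norm.hasSum
  have hterm : ∀ k, qExpCoeff Q Q (k + 1) * (Q * z) ^ (k + 1)
      - z * (qExpCoeff Q Q k * (Q * z) ^ k) = qExpCoeff Q Q (k + 1) * z ^ (k + 1) := fun k => by
    linear_combination (-z ^ (k + 1)) * qExpCoeff_succ_mul Q hQ k
  have htail := ((hasSum_nat_add_iff' 1).2 hS).sub (hS.mul_left z)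
  simp only [hterm] at htail
  refine ((hasSum_nat_add_iff' 1).1 ?_).tsum_eq
  convert htail using 1
  simp [qExpCoeff_zero]
  ring

lemma tsum_qExpCoeff_mul_pow_eq_qPoch_mul {Q : ℂ} (hQ : ‖Q‖ < 1) (z : ℂ) (N : ℕ) :
    ∑' k, qExpCoeff Q Q k * z ^ k = qPoch z Q N * ∑' k, qExpCoeff Q Q k * (Q ^ N * z) ^ k := by
  induction N with
  | zero => simp [qPoch]
  | succ n ih =>
    rw [ih, tsum_qExpCoeff_mul_pow_eq hQ, qPoch_succ, pow_succ']
    ring_nf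

lemma tendsto_tsum_qExpCoeff_mul_pow {p Q : ℂ} (hp : ‖p‖ < 1) (hQ : ‖Q‖ < 1) (z : ℂ) :
    Tendsto (fun N : ℕ => ∑' k, qExpCoeff p Q k * (Q ^ N * z) ^ k) atTop (𝓝 1) := by
  have hlim : Tendsto (fun N : ℕ => Q ^ N * z) atTop (𝓝 0) := by
    simpa using (tendsto_pow_atTop_nhds_zero_of_norm_lt_one hQ).mul_const z
  have key := tendsto_tsum_of_dominated_convergence (summable_norm_qExpCoeff_mul_pow hp hQ z)
    (fun k => ((hlim.pow k).const_mul (qExpCoeff p Q k))) (Eventually.of_forall fun N k => ?_)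
  · rw [tsum_eq_single 0 fun k hk => by rw [zero_pow hk, mul_zero]] at key
    simpa [qExpCoeff_zero] using key
  · rw [norm_mul, norm_mul, norm_pow, norm_pow, norm_mul, norm_pow]
    gcongr
    exact mul_le_of_le_one_left (norm_nonneg z) (pow_le_one₀ (norm_nonneg Q) hQ.le)

theorem hasSum_qExpCoeff_mul_pow {Q : ℂ} (hQ : ‖Q‖ < 1) (z : ℂ) :
    HasSum (fun k => qExpCoeff Q Q k * z ^ k) (qPochInf z Q) := by
  refine (summable_norm_qExpCoeff_mul_pow hQ hQ z).of_norm.hasSum_iff.2 ?_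
  have hlim := ((multipliable_one_sub_mul_pow z hQ).tendsto_prod_tprod_nat).mul
    (tendsto_tsum_qExpCoeff_mul_pow hQ hQ z)
  rw [mul_one] at hlim
  exact tendsto_nhds_unique
    (tendsto_const_nhds.congr fun N => tsum_qExpCoeff_mul_pow_eq_qPoch_mul hQ z N) hlim

noncomputable def thetaTerm (q y : ℂ) (n : ℤ) : ℂ := q ^ (n * (n - 1) / 2) * y ^ n

lemma jTheta_eq_tsum (q y : ℂ) : jTheta q y = ∑' n, thetaTerm q y n := rfl

lemma Int.triangle_succ (n : ℤ) : (n + 1) * (n + 1 - 1) / 2 = n * (n - 1) / 2 + n := by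
  rw [show (n + 1) * (n + 1 - 1) = n * (n - 1) + n * 2 by ring,
    Int.add_mul_ediv_right _ _ two_ne_zero]

lemma thetaTerm_add_one {q y : ℂ} (hq : q ≠ 0) (hy : y ≠ 0) (n : ℤ) :
    thetaTerm q y (n + 1) = q ^ n * y * thetaTerm q y n := by
  rw [thetaTerm, thetaTerm, Int.triangle_succ, zpow_add₀ hq, zpow_add_one₀ hy]
  ring

lemma summable_norm_thetaTerm {q y : ℂ} (hq0 : q ≠ 0) (hq1 : ‖q‖ < 1) (hy : y ≠ 0) :
    Summable fun n => ‖thetaTerm q y n‖ := by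
  have hgeom := tendsto_pow_atTop_nhds_zero_of_lt_one (norm_nonneg q) hq1
  refine .of_nat_of_neg ?_ ?_
  · refine summable_norm_of_norm_succ_le (f := fun k : ℕ => thetaTerm q y k)
      (by simpa using hgeom.mul_const ‖y‖) fun k => ?_
    simp [thetaTerm_add_one hq0 hy]
  · refine summable_norm_of_norm_succ_le (f := fun k : ℕ => thetaTerm q y (-k))
      (by simpa using (hgeom.mul_const ‖q‖).mul_const ‖y‖⁻¹) fun k => ?_
    have h := thetaTerm_add_one hq0 hy (-(k + 1 : ℕ))
    rw [show -((k + 1 : ℕ) : ℤ) + 1 = -k by push_cast; ring] at h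
    refine le_of_eq ?_
    rw [h, norm_mul, norm_mul, norm_zpow, zpow_neg, zpow_natCast, pow_succ]
    field_simp

lemma qAiry_eq_tsum (q x : ℂ) : qAiry q x = ∑' k, qExpCoeff q (q ^ 2) k * (-x) ^ k := by
  refine tsum_congr fun k => ?_
  rw [qExpCoeff, mul_comm (qPoch (-q) q k), qPoch_mul_qPoch_neg]

noncomputable def thetaAiryTerm (q y x : ℂ) (p : ℤ × ℕ) : ℂ :=
  thetaTerm q y p.1 * (qExpCoeff q (q ^ 2) p.2 * x ^ p.2)

lemma thetaAiryTerm_neg (q y x : ℂ) (p : ℤ × ℕ) :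
    thetaAiryTerm q (-y) (-x) p = (-1) ^ (p.1 + p.2) * thetaAiryTerm q y x p := by
  rw [thetaAiryTerm, thetaAiryTerm, thetaTerm, thetaTerm, neg_eq_neg_one_mul y, mul_zpow,
    neg_eq_neg_one_mul x, mul_pow, zpow_add₀ (by norm_num), zpow_natCast]
  ring

lemma summable_thetaAiryTerm {q y : ℂ} (hq0 : q ≠ 0) (hq1 : ‖q‖ < 1) (hy : y ≠ 0)
    (x : ℂ) :
    Summable (thetaAiryTerm q y x) :=
  summable_mul_of_summable_norm (f := thetaTerm q y)
    (g := fun k => qExpCoeff q (q ^ 2) k * x ^ k) (summable_norm_thetaTerm hq0 hq1 hy)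
    (summable_norm_qExpCoeff_mul_pow hq1 (norm_sq_lt_one hq1) x)

lemma jTheta_mul_qAiry_add {q x : ℂ} (hq0 : q ≠ 0) (hq1 : ‖q‖ < 1) (hx : x ≠ 0) :
    jTheta q (x / q) * qAiry q (-x) + jTheta q (-(x / q)) * qAiry q x
      = ∑' p : ℤ × ℕ, (1 + (-1) ^ (p.1 + p.2)) * thetaAiryTerm q (x / q) x p := by
  have hy : x / q ≠ 0 := div_ne_zero hx hq0
  have hA := summable_norm_qExpCoeff_mul_pow hq1 (norm_sq_lt_one hq1)
  rw [qAiry_eq_tsum, qAiry_eq_tsum, neg_neg, jTheta_eq_tsum, jTheta_eq_tsum,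
    tsum_mul_tsum_of_summable_norm (summable_norm_thetaTerm hq0 hq1 hy) (hA x),
    tsum_mul_tsum_of_summable_norm (summable_norm_thetaTerm hq0 hq1 (neg_ne_zero.2 hy)) (hA (-x))]
  change ∑' p, thetaAiryTerm q (x / q) x p + ∑' p, thetaAiryTerm q (-(x / q)) (-x) p = _
  rw [← (summable_thetaAiryTerm hq0 hq1 hy x).tsum_add
      (summable_thetaAiryTerm hq0 hq1 (neg_ne_zero.2 hy) (-x))]
  refine tsum_congr fun p => ?_
  rw [thetaAiryTerm_neg]
  ring

lemma injective_two_mul_sub :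
    Function.Injective fun p : ℤ × ℕ => (2 * p.1 - (p.2 : ℤ), p.2) := by
  intro a b h
  simp only [Prod.mk.injEq] at h
  ext <;> omega

/-- Only the terms with `n + k` even survive, and these are indexed by `(m, k) ↦ (2m - k, k)`. -/
lemma tsum_one_add_neg_one_zpow_mul (F : ℤ × ℕ → ℂ) :
    ∑' p : ℤ × ℕ, (1 + (-1) ^ (p.1 + p.2)) * F p
      = ∑' p : ℤ × ℕ, 2 * F (2 * p.1 - p.2, p.2) := by
  rw [← injective_two_mul_sub.tsum_eq]
  · refine tsum_congr fun p => ?_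
    rw [show 2 * p.1 - (p.2 : ℤ) + (p.2 : ℤ) = 2 * p.1 by ring, zpow_mul]
    norm_num
  · intro p hp
    obtain ⟨t, ht | ht⟩ := Int.even_or_odd' (p.1 + p.2)
    · exact ⟨(t, p.2), Prod.ext (by simp; omega) rfl⟩
    · rw [Function.mem_support, ht, zpow_add_one₀ (by norm_num), zpow_mul] at hp
      norm_num at hp

lemma tsum_int_eq_tsum_nat_neg {M : Type*} [AddCommMonoid M] [TopologicalSpace M] {G : ℤ → M}
    (hG : ∀ m, 0 < m → G m = 0) :
    ∑' m, G m = ∑' j : ℕ, G (-j) := by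
  refine (Function.Injective.tsum_eq (fun a b h => by simpa using h) fun m hm => ?_).symm
  have : m ≤ 0 := not_lt.1 fun h => hm (hG m h)
  exact ⟨(-m).toNat, by simp [this]⟩

lemma natCast_mul_pred_div_two_mul_two (k : ℕ) :
    ((k * (k - 1) / 2 : ℕ) : ℤ) * 2 = k * (k - 1) := by
  have h : k * (k - 1) / 2 * 2 = k * (k - 1) :=
    Nat.div_mul_cancel (Nat.even_mul_pred_self k).two_dvd
  rcases k.eq_zero_or_pos with rfl | hk
  · simp
  · have h' := congrArg (Nat.cast : ℕ → ℤ) h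
    push_cast [Nat.cast_sub hk] at h' ⊢
    exact h'

lemma thetaAiryTerm_two_mul_sub {q x : ℂ} (hq : q ≠ 0) (hx : x ≠ 0) (m : ℤ) (k : ℕ) :
    thetaAiryTerm q (x / q) x (2 * m - k, k)
      = q ^ (2 * m ^ 2 - 3 * m) * x ^ (2 * m)
        * (qExpCoeff (q ^ 2) (q ^ 2) k * (q ^ (2 - 2 * m)) ^ k) := by
  set n : ℤ := 2 * m - k
  set K : ℕ := k * (k - 1) / 2
  have hn : n * (n - 1) / 2 * 2 = n * (n - 1) :=
    Int.ediv_mul_cancel (Int.even_mul_pred_self n).two_dvd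
  have hK := natCast_mul_pred_div_two_mul_two k
  have hqpow : q ^ (n * (n - 1) / 2) * q ^ (K : ℤ) * (q ^ n)⁻¹
      = q ^ (2 * m ^ 2 - 3 * m) * q ^ ((2 * K : ℕ) : ℤ) * q ^ ((2 - 2 * m) * k) := by
    simp only [← zpow_neg, ← zpow_add₀ hq]
    congr 1
    push_cast
    linarith
  have hxpow : x ^ n * x ^ (k : ℤ) = x ^ (2 * m) := by
    rw [← zpow_add₀ hx, sub_add_cancel]
  simp only [thetaAiryTerm, thetaTerm, qExpCoeff]
  rw [div_zpow, ← pow_mul, ← zpow_natCast q K, ← zpow_natCast q (2 * K), ← zpow_natCast x k,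
    ← zpow_natCast (q ^ (2 - 2 * m)) k, ← zpow_mul]
  calc _ = (-1) ^ k / qPoch (q ^ 2) (q ^ 2) k
        * (q ^ (n * (n - 1) / 2) * q ^ (K : ℤ) * (q ^ n)⁻¹) * (x ^ n * x ^ (k : ℤ)) := by ring
    _ = _ := by rw [hqpow, hxpow]; ring

lemma tsum_two_mul_thetaAiryTerm_two_mul_sub {q x : ℂ} (hq0 : q ≠ 0) (hq1 : ‖q‖ < 1)
    (hx : x ≠ 0) :
    ∑' p : ℤ × ℕ, 2 * thetaAiryTerm q (x / q) x (2 * p.1 - p.2, p.2)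
      = ∑' m : ℤ, 2 * q ^ (2 * m ^ 2 - 3 * m) * x ^ (2 * m)
          * qPochInf (q ^ (2 - 2 * m)) (q ^ 2) := by
  have hS : Summable fun p : ℤ × ℕ => 2 * thetaAiryTerm q (x / q) x (2 * p.1 - p.2, p.2) :=
    ((summable_thetaAiryTerm hq0 hq1 (div_ne_zero hx hq0) x).comp_injective
      injective_two_mul_sub).mul_left 2
  rw [hS.tsum_prod' hS.prod_factor]
  refine tsum_congr fun m => ?_
  simp_rw [thetaAiryTerm_two_mul_sub hq0 hx, mul_assoc, tsum_mul_left,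
    (hasSum_qExpCoeff_mul_pow (norm_sq_lt_one hq1) _).tsum_eq]

lemma qPochInf_zpow_eq_zero {q : ℂ} (hq0 : q ≠ 0) (hq1 : ‖q‖ < 1) {m : ℤ} (hm : 0 < m) :
    qPochInf (q ^ (2 - 2 * m)) (q ^ 2) = 0 := by
  refine qPochInf_eq_zero (norm_sq_lt_one hq1) (N := (m - 1).toNat) ?_
  rw [← pow_mul, ← zpow_natCast, ← zpow_add₀ hq0, ← zpow_zero q]
  push_cast [Int.toNat_of_nonneg (by omega : 0 ≤ m - 1)]
  ring_nf

lemma qPochInf_zpow_neg {q : ℂ} (hq1 : ‖q‖ < 1) (j : ℕ) :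
    qPochInf (q ^ (2 - 2 * -(j : ℤ))) (q ^ 2)
      = qPochInf (q ^ 2) (q ^ 2) / qPoch (q ^ 2) (q ^ 2) j := by
  rw [eq_div_iff (qPoch_ne_zero (mul_pow_ne_one (norm_sq_lt_one hq1)) j), mul_comm,
    ← qPoch_mul_qPochInf (q ^ 2) (norm_sq_lt_one hq1) j]
  congr 2
  rw [← pow_mul, ← pow_add, ← zpow_natCast]
  push_cast
  ring_nf

lemma summand_neg_natCast {q : ℂ} (hq1 : ‖q‖ < 1) (x : ℂ) (j : ℕ) :
    2 * q ^ (2 * (-j : ℤ) ^ 2 - 3 * -(j : ℤ)) * x ^ (2 * -(j : ℤ))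
        * qPochInf (q ^ (2 - 2 * -(j : ℤ))) (q ^ 2)
      = 2 * qPochInf (q ^ 2) (q ^ 2)
        * ((q ^ 2) ^ (j ^ 2) / qPoch (q ^ 2) (q ^ 2) j * (-(-(q ^ 3 / x ^ 2))) ^ j) := by
  rw [qPochInf_zpow_neg hq1,
    show 2 * (-(j : ℤ)) ^ 2 - 3 * -(j : ℤ) = ((2 * j ^ 2 + 3 * j : ℕ) : ℤ) by
      push_cast; ring,
    show 2 * -(j : ℤ) = -((2 * j : ℕ) : ℤ) by push_cast; ring,
    zpow_neg, zpow_natCast, zpow_natCast, neg_neg, div_pow, ← pow_mul, ← pow_mul, ← pow_mul,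
    pow_add]
  field_simp

/-- Connection formula between the Ramanujan function and the q-Airy function. -/
theorem ramanujan_qAiry_connection (q : ℂ) (hq0 : 0 < ‖q‖) (hq1 : ‖q‖ < 1)
    (x : ℂ) (hx : x ≠ 0) :
    ramanujanA (q ^ 2) (-(q ^ 3 / x ^ 2))
      = (qPochInf q q * qPochInf (-1) q)⁻¹ *
          (jTheta q (x / q) * qAiry q (-x) + jTheta q (-(x / q)) * qAiry q x) := by
  have hq : q ≠ 0 := norm_pos_iff.mp hq0
  have hq2 := norm_sq_lt_one hq1
  have hP : qPochInf q q * qPochInf (-1) q = 2 * qPochInf (q ^ 2) (q ^ 2) := by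
    rw [qPochInf_neg_one hq1, mul_left_comm, qPochInf_mul_qPochInf_neg q hq1]
  have hP0 : 2 * qPochInf (q ^ 2) (q ^ 2) ≠ 0 :=
    mul_ne_zero two_ne_zero (qPochInf_ne_zero hq2 (mul_pow_ne_one hq2))
  rw [jTheta_mul_qAiry_add hq hq1 hx, tsum_one_add_neg_one_zpow_mul,
    tsum_two_mul_thetaAiryTerm_two_mul_sub hq hq1 hx,
    tsum_int_eq_tsum_nat_neg fun m hm => by rw [qPochInf_zpow_eq_zero hq hq1 hm, mul_zero],
    tsum_congr (summand_neg_natCast hq1 x), tsum_mul_left, hP, inv_mul_cancel_left₀ hP0]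
  rfl
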